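/- For an integer μ ≥ 1, let Q_μ be the 4×4 real matrix with rows and columns indexed by the transient states x₁, x₂, x₃, x₄, whose only nonzero entries are Q_μ(x₂,x₁) = 1, Q_μ(x₄,x₃) = 2^{−μ}, and Q_μ(x₄,x₂) = 1 − 2^{−μ}. Then I − Q_μ is invertible, and the vector of expected absorption times m = (I − Q_μ)⁻¹·𝟙 satisfies m(x₁) = 1, m(x₂) = 2, m(x₃) = 1, and m(x₄) = 3 − 2^{−μ}. Consequently max_X m(X) = 3 − 2^{−μ} is strictly increasing in μ, it equals 5/2 for μ = 1, and hence the ∞-scalability (5/2)/(3 − 2^{−μ}) is strictly less than 1 for every μ ≥ 2. (Q_μ is the transient submatrix of the (1+μ) elitist EA of the paper's counterexample with ε = 0, showing that increasing the population size increases the maximal expected number of generations to find the optimum.) -/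

import Mathlib

/-!
`Q_μ` is strictly lower triangular, so `I - Q_μ` is unitriangular with determinant `1`, and
`m = (I - Q_μ)⁻¹ 𝟙` is the unique solution of `(I - Q_μ) m = 𝟙`, which is checked directly for
`m = (1, 2, 1, 3 - 2⁻ᵘ)`. Since `2⁻ᵘ ≤ 1`, the largest entry is `m(x₄)`, and `3 - 2⁻ᵘ` is
strictly increasing in `μ` because `2⁻ᵘ` is strictly decreasing; comparing with its value `5/2`
at `μ = 1` gives the scalability bound.
-/

open Matrix

/-- The transient transition submatrix of the `(1+μ)` elitist EA of the paper's first
counterexample (with `ε = 0`): states `x₁,x₂,x₃,x₄` are indexed by `0,1,2,3`; the only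
nonzero entries are `Q(x₂,x₁) = 1`, `Q(x₄,x₃) = 2⁻ᵘ` and `Q(x₄,x₂) = 1 - 2⁻ᵘ`. -/
noncomputable def Qmu (μ : ℕ) : Matrix (Fin 4) (Fin 4) ℝ := fun i j =>
  if i = 1 ∧ j = 0 then 1
  else if i = 3 ∧ j = 2 then (1 / 2 : ℝ) ^ μ
  else if i = 3 ∧ j = 1 then 1 - (1 / 2 : ℝ) ^ μ
  else 0

theorem Matrix.det_one_sub_eq_one_of_strictLowerTriangular {n R : Type*} [Fintype n]
    [DecidableEq n] [LinearOrder n] [CommRing R] {Q : Matrix n n R}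
    (hQ : ∀ i j, i ≤ j → Q i j = 0) : (1 - Q).det = 1 := by
  rw [det_of_isLowerTriangular]
  · exact Finset.prod_eq_one fun i _ => by simp [hQ i i le_rfl]
  · intro i j hij
    have hij : i < j := hij
    simp [one_apply_ne hij.ne, hQ i j hij.le]

theorem Finite.ciSup_eq_of_forall_le {ι α : Type*} [Finite ι] [ConditionallyCompleteLattice α]
    {f : ι → α} (i : ι) (h : ∀ j, f j ≤ f i) : ⨆ j, f j = f i :=
  have : Nonempty ι := ⟨i⟩
  le_antisymm (ciSup_le h) (le_ciSup f i)

theorem strictMono_sub_pow_of_lt_one {R : Type*} [CommRing R] [LinearOrder R]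
    [IsStrictOrderedRing R] {a r : R} (h₀ : 0 < r) (h₁ : r < 1) :
    StrictMono fun n : ℕ => a - r ^ n :=
  fun _ _ hmn => sub_lt_sub_left (pow_lt_pow_right_of_lt_one₀ h₀ h₁ hmn) a

theorem Qmu_eq_zero_of_le (μ : ℕ) {i j : Fin 4} (hij : i ≤ j) : Qmu μ i j = 0 := by
  fin_cases i <;> fin_cases j <;> simp_all [Qmu]

theorem det_one_sub_Qmu (μ : ℕ) : (1 - Qmu μ).det = 1 :=
  det_one_sub_eq_one_of_strictLowerTriangular fun _ _ => Qmu_eq_zero_of_le μ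

theorem isUnit_one_sub_Qmu (μ : ℕ) : IsUnit (1 - Qmu μ) := by
  rw [isUnit_iff_isUnit_det, det_one_sub_Qmu]
  exact isUnit_one

theorem one_sub_Qmu_mulVec_absorptionTimes (μ : ℕ) :
    (1 - Qmu μ) *ᵥ ![1, 2, 1, 3 - (1 / 2 : ℝ) ^ μ] = fun _ => 1 := by
  funext i
  fin_cases i <;>
    simp [mulVec, dotProduct, Qmu, Matrix.sub_apply, one_apply, Fin.sum_univ_four] <;> ring

theorem inv_one_sub_Qmu_mulVec_one (μ : ℕ) :
    (1 - Qmu μ)⁻¹ *ᵥ (fun _ => 1) = ![1, 2, 1, 3 - (1 / 2 : ℝ) ^ μ] :=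
  have := (isUnit_one_sub_Qmu μ).invertible
  inv_mulVec_eq_vec (one_sub_Qmu_mulVec_absorptionTimes μ).symm

theorem stmt_13_general (μ : ℕ) :
    IsUnit (1 - Qmu μ) ∧
    (let m : Fin 4 → ℝ := (1 - Qmu μ)⁻¹ *ᵥ (fun _ => 1);
      m 0 = 1 ∧ m 1 = 2 ∧ m 2 = 1 ∧ m 3 = 3 - (1 / 2 : ℝ) ^ μ ∧
      (⨆ X, m X) = 3 - (1 / 2 : ℝ) ^ μ) ∧
    (∀ ν : ℕ, μ < ν → (3 : ℝ) - (1 / 2 : ℝ) ^ μ < 3 - (1 / 2 : ℝ) ^ ν) ∧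
    ((3 : ℝ) - (1 / 2 : ℝ) ^ (1 : ℕ) = 5 / 2) ∧
    (2 ≤ μ → (5 / 2 : ℝ) / (3 - (1 / 2 : ℝ) ^ μ) < 1) := by
  have hmono := strictMono_sub_pow_of_lt_one (a := (3 : ℝ)) (r := 1 / 2) (by norm_num) (by norm_num)
  have hvalue : (3 : ℝ) - (1 / 2 : ℝ) ^ (1 : ℕ) = 5 / 2 := by norm_num
  refine ⟨isUnit_one_sub_Qmu μ, ?_, fun _ hν => hmono hν, hvalue, fun hμ => ?_⟩
  · intro m
    rw [show m = _ from inv_one_sub_Qmu_mulVec_one μ]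
    have hpow : (1 / 2 : ℝ) ^ μ ≤ 1 := pow_le_one₀ (by norm_num) (by norm_num)
    refine ⟨rfl, rfl, rfl, rfl, Finite.ciSup_eq_of_forall_le 3 fun j => ?_⟩
    fin_cases j <;> simp only [Fin.reduceFinMk, Matrix.cons_val] <;> linarith
  · have hlt : (5 / 2 : ℝ) < 3 - (1 / 2 : ℝ) ^ μ := hvalue ▸ hmono hμ
    exact (div_lt_one (by linarith)).mpr hlt

/-- for `μ ≥ 1`, `I - Q_μ` is invertible, the expected absorption times
`m = (I - Q_μ)⁻¹ · 𝟙` are `m(x₁) = 1`, `m(x₂) = 2`, `m(x₃) = 1`, `m(x₄) = 3 - 2⁻ᵘ`;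
hence `max_X m(X) = 3 - 2⁻ᵘ`, which is strictly increasing in `μ`, equals `5/2` at
`μ = 1`, and so the ∞-scalability `(5/2)/(3 - 2⁻ᵘ)` is `< 1` for every `μ ≥ 2`. -/
theorem stmt_13 (μ : ℕ) (hμ : 1 ≤ μ) :
    IsUnit (1 - Qmu μ) ∧
    (let m : Fin 4 → ℝ := (1 - Qmu μ)⁻¹ *ᵥ (fun _ => 1);
      m 0 = 1 ∧ m 1 = 2 ∧ m 2 = 1 ∧ m 3 = 3 - (1 / 2 : ℝ) ^ μ ∧
      (⨆ X, m X) = 3 - (1 / 2 : ℝ) ^ μ) ∧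
    (∀ ν : ℕ, μ < ν → (3 : ℝ) - (1 / 2 : ℝ) ^ μ < 3 - (1 / 2 : ℝ) ^ ν) ∧
    ((3 : ℝ) - (1 / 2 : ℝ) ^ (1 : ℕ) = 5 / 2) ∧
    (2 ≤ μ → (5 / 2 : ℝ) / (3 - (1 / 2 : ℝ) ^ μ) < 1) :=
  stmt_13_general μ
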